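/- arXiv:1402.0818 — 2 statements merged into one kernel-verified Lean document; each statement's English description precedes it below -/
import Mathlib

section
/- Let X and Y be nontrivial Banach spaces. Then the ℓ_1-sum X ⊕_1 Y is never ASQ. Concretely, for x ∈ S_X and y ∈ S_Y, the unit vectors z_1 = (−x/3, 2y/3) and z_2 = (2x/3, −y/3) have the property that there is no w ∈ S_{X⊕_1 Y} with ‖z_i + w‖ ≤ 1 + 1/9 and ‖z_i − w‖ ≤ 1 + 1/9 for i = 1, 2. -/
/-- A Banach space is almost square (ASQ). -/
def IsASQ (Z : Type*) [NormedAddCommGroup Z] [NormedSpace ℝ Z] : Prop :=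
  ∀ S : Finset Z, (∀ z ∈ S, ‖z‖ = 1) → ∀ ε : ℝ, 0 < ε →
    ∃ w : Z, ‖w‖ = 1 ∧ ∀ z ∈ S, ‖z + w‖ ≤ 1 + ε ∧ ‖z - w‖ ≤ 1 + ε

/-! In `X ⊕₁ Y` the triangle inequality, applied coordinatewise, gives
`‖z + w‖ + ‖z - w‖ ≥ 2 (‖w.1‖ + ‖z.2‖)` and `≥ 2 (‖z.1‖ + ‖w.2‖)`. Using the first bound for `z₁`,
whose second coordinate has norm `2/3`, and the second for `z₂`, whose first coordinate has norm
`2/3`, the four bounds `1 + 1/9` give `2 ‖w‖ + 8/3 ≤ 4 (1 + 1/9)`, i.e. `‖w‖ ≤ 8/9 < 1`. -/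

open WithLp

section TwoVectors

variable {E : Type*} [SeminormedAddCommGroup E] [NormedSpace ℝ E]

theorem two_mul_norm_le_norm_add_add_norm_sub_left (u v : E) :
    2 * ‖u‖ ≤ ‖u + v‖ + ‖u - v‖ :=
  calc 2 * ‖u‖ = ‖(u + v) + (u - v)‖ := by
        rw [add_add_sub_cancel, ← two_smul ℝ, norm_smul, Real.norm_two]
    _ ≤ ‖u + v‖ + ‖u - v‖ := norm_add_le _ _

theorem two_mul_norm_le_norm_add_add_norm_sub_right (u v : E) :
    2 * ‖v‖ ≤ ‖u + v‖ + ‖u - v‖ := by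
  simpa only [add_comm v, norm_sub_rev v] using two_mul_norm_le_norm_add_add_norm_sub_left v u

end TwoVectors

section L1Sum

variable {X Y : Type*} [SeminormedAddCommGroup X] [NormedSpace ℝ X]
  [SeminormedAddCommGroup Y] [NormedSpace ℝ Y]

theorem WithLp.two_mul_norm_fst_add_norm_snd_le (z w : WithLp 1 (X × Y)) :
    2 * (‖z.fst‖ + ‖w.snd‖) ≤ ‖z + w‖ + ‖z - w‖ := by
  have := two_mul_norm_le_norm_add_add_norm_sub_left z.fst w.fst
  have := two_mul_norm_le_norm_add_add_norm_sub_right z.snd w.snd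
  simp only [prod_norm_eq_of_L1, add_fst, add_snd, sub_fst, sub_snd]
  linarith

theorem WithLp.two_mul_norm_fst_add_norm_snd_le' (z w : WithLp 1 (X × Y)) :
    2 * (‖w.fst‖ + ‖z.snd‖) ≤ ‖z + w‖ + ‖z - w‖ := by
  have := two_mul_norm_le_norm_add_add_norm_sub_right z.fst w.fst
  have := two_mul_norm_le_norm_add_add_norm_sub_left z.snd w.snd
  simp only [prod_norm_eq_of_L1, add_fst, add_snd, sub_fst, sub_snd]
  linarith

theorem WithLp.norm_add_norm_snd_add_norm_fst_le {z₁ z₂ w : WithLp 1 (X × Y)} {c : ℝ}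
    (h₁ : ‖z₁ + w‖ ≤ c) (h₁' : ‖z₁ - w‖ ≤ c) (h₂ : ‖z₂ + w‖ ≤ c) (h₂' : ‖z₂ - w‖ ≤ c) :
    ‖w‖ + ‖z₁.snd‖ + ‖z₂.fst‖ ≤ 2 * c := by
  have := two_mul_norm_fst_add_norm_snd_le' z₁ w
  have := two_mul_norm_fst_add_norm_snd_le z₂ w
  rw [prod_norm_eq_of_L1]
  linarith

end L1Sum

theorem IsASQ.exists_of_norm_eq_one {Z : Type*} [NormedAddCommGroup Z] [NormedSpace ℝ Z]
    (h : IsASQ Z) {z₁ z₂ : Z} (h₁ : ‖z₁‖ = 1) (h₂ : ‖z₂‖ = 1) {ε : ℝ} (hε : 0 < ε) :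
    ∃ w : Z, ‖w‖ = 1 ∧ ‖z₁ + w‖ ≤ 1 + ε ∧ ‖z₁ - w‖ ≤ 1 + ε ∧
      ‖z₂ + w‖ ≤ 1 + ε ∧ ‖z₂ - w‖ ≤ 1 + ε := by
  classical
  obtain ⟨w, hw, hS⟩ := h {z₁, z₂} (by simp [h₁, h₂]) ε hε
  obtain ⟨hz₁, hz₁'⟩ := hS z₁ (by simp)
  obtain ⟨hz₂, hz₂'⟩ := hS z₂ (by simp)
  exact ⟨w, hw, hz₁, hz₁', hz₂, hz₂'⟩

theorem stmt_15_general (X Y : Type*) [NormedAddCommGroup X] [NormedSpace ℝ X]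
    [NormedAddCommGroup Y] [NormedSpace ℝ Y]
    (x : X) (y : Y) (hx : ‖x‖ = 1) (hy : ‖y‖ = 1)
    (z₁ z₂ : WithLp 1 (X × Y))
    (hz₁ : z₁ = (WithLp.equiv 1 (X × Y)).symm (-(1/3 : ℝ) • x, (2/3 : ℝ) • y))
    (hz₂ : z₂ = (WithLp.equiv 1 (X × Y)).symm ((2/3 : ℝ) • x, -(1/3 : ℝ) • y)) :
    ¬ IsASQ (WithLp 1 (X × Y)) ∧
      ¬ ∃ w : WithLp 1 (X × Y), ‖w‖ = 1 ∧
        ‖z₁ + w‖ ≤ 1 + 1/9 ∧ ‖z₁ - w‖ ≤ 1 + 1/9 ∧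
        ‖z₂ + w‖ ≤ 1 + 1/9 ∧ ‖z₂ - w‖ ≤ 1 + 1/9 := by
  have hz₁_snd : ‖z₁.snd‖ = 2 / 3 := by simp [hz₁, norm_smul, hy]
  have hz₂_fst : ‖z₂.fst‖ = 2 / 3 := by simp [hz₂, norm_smul, hx]
  have hz₁_norm : ‖z₁‖ = 1 := by norm_num [hz₁, prod_norm_eq_of_L1, norm_smul, hx, hy]
  have hz₂_norm : ‖z₂‖ = 1 := by norm_num [hz₂, prod_norm_eq_of_L1, norm_smul, hx, hy]
  have no_witness : ¬ ∃ w : WithLp 1 (X × Y), ‖w‖ = 1 ∧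
      ‖z₁ + w‖ ≤ 1 + 1/9 ∧ ‖z₁ - w‖ ≤ 1 + 1/9 ∧ ‖z₂ + w‖ ≤ 1 + 1/9 ∧ ‖z₂ - w‖ ≤ 1 + 1/9 := by
    rintro ⟨w, hw, h₁, h₁', h₂, h₂'⟩
    have := norm_add_norm_snd_add_norm_fst_le h₁ h₁' h₂ h₂'
    linarith
  exact ⟨fun hASQ => no_witness (hASQ.exists_of_norm_eq_one hz₁_norm hz₂_norm (by norm_num)),
    no_witness⟩

theorem stmt_15 (X Y : Type*) [NormedAddCommGroup X] [NormedSpace ℝ X] [CompleteSpace X]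
    [NormedAddCommGroup Y] [NormedSpace ℝ Y] [CompleteSpace Y]
    (x : X) (y : Y) (hx : ‖x‖ = 1) (hy : ‖y‖ = 1)
    (z₁ z₂ : WithLp 1 (X × Y))
    (hz₁ : z₁ = (WithLp.equiv 1 (X × Y)).symm (-(1/3 : ℝ) • x, (2/3 : ℝ) • y))
    (hz₂ : z₂ = (WithLp.equiv 1 (X × Y)).symm ((2/3 : ℝ) • x, -(1/3 : ℝ) • y)) :
    ¬ IsASQ (WithLp 1 (X × Y)) ∧
      ¬ ∃ w : WithLp 1 (X × Y), ‖w‖ = 1 ∧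
        ‖z₁ + w‖ ≤ 1 + 1/9 ∧ ‖z₁ - w‖ ≤ 1 + 1/9 ∧
        ‖z₂ + w‖ ≤ 1 + 1/9 ∧ ‖z₂ - w‖ ≤ 1 + 1/9 :=
  stmt_15_general X Y x y hx hy z₁ z₂ hz₁ hz₂
end

section
/- Let X and Y be nontrivial Banach spaces. Then X ⊕_∞ Y is ASQ if and only if X is ASQ or Y is ASQ. -/
open scoped ENNReal

/-!
The ASQ condition on the unit sphere extends to the unit ball by convexity. Hence a witness `w`
for `X`, tested against the first coordinates of a finite set in the sphere of `X ⊕_∞ Y`, yields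
the witness `(w, 0)` for the sum. Conversely, if `Y` fails the ASQ condition on a finite set `T`,
test the sum on the points `(x, 0)` and `(0, y)` with `y ∈ T`: the witness cannot have a
second coordinate of norm one, so its first coordinate is a witness for `X`.
-/

open WithLp

section

variable {E : Type*} [NormedAddCommGroup E] [NormedSpace ℝ E]

theorem norm_add_le_of_norm_inv_smul_add_le {a w : E} {ε : ℝ} (ha : ‖a‖ ≤ 1) (hw : ‖w‖ ≤ 1)
    (hε : 0 ≤ ε) (h : ‖‖a‖⁻¹ • a + w‖ ≤ 1 + ε) : ‖a + w‖ ≤ 1 + ε := by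
  rcases eq_or_ne a 0 with rfl | ha0
  · simpa using h
  set r := ‖a‖
  have hr : 0 < r := norm_pos_iff.mpr ha0
  have hconv : a + w = r • (r⁻¹ • a + w) + (1 - r) • w := by
    rw [smul_add, smul_inv_smul₀ hr.ne', sub_smul, one_smul]
    abel
  calc ‖a + w‖ ≤ r * ‖r⁻¹ • a + w‖ + (1 - r) * ‖w‖ := by
        rw [hconv]
        refine (norm_add_le _ _).trans_eq ?_
        rw [norm_smul, norm_smul, Real.norm_of_nonneg hr.le, Real.norm_of_nonneg (by linarith)]
    _ ≤ r * (1 + ε) + (1 - r) * 1 := by gcongr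
    _ ≤ 1 + ε := by nlinarith

theorem IsASQ.exists_of_norm_le_one (hE : IsASQ E) {S : Finset E} (hS : ∀ z ∈ S, ‖z‖ ≤ 1)
    {ε : ℝ} (hε : 0 < ε) : ∃ w : E, ‖w‖ = 1 ∧ ∀ z ∈ S, ‖z + w‖ ≤ 1 + ε ∧ ‖z - w‖ ≤ 1 + ε := by
  classical
  obtain ⟨w, hw, hwT⟩ := hE ((S.image fun z => ‖z‖⁻¹ • z).filter fun u => ‖u‖ = 1)
    (fun u hu => (Finset.mem_filter.mp hu).2) ε hε
  have hnormalized : ∀ z ∈ S, ‖‖z‖⁻¹ • z + w‖ ≤ 1 + ε ∧ ‖‖z‖⁻¹ • z - w‖ ≤ 1 + ε := by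
    intro z hz
    rcases eq_or_ne z 0 with rfl | hz0
    · simp [hw, hε.le]
    refine hwT _ (Finset.mem_filter.mpr ⟨Finset.mem_image_of_mem _ hz, ?_⟩)
    rw [norm_smul, norm_inv, norm_norm, inv_mul_cancel₀ (norm_ne_zero_iff.mpr hz0)]
  refine ⟨w, hw, fun z hz => ⟨?_, ?_⟩⟩
  · exact norm_add_le_of_norm_inv_smul_add_le (hS z hz) hw.le hε.le (hnormalized z hz).1
  · rw [sub_eq_add_neg]
    refine norm_add_le_of_norm_inv_smul_add_le (hS z hz) (norm_neg w ▸ hw.le) hε.le ?_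
    simpa [sub_eq_add_neg] using (hnormalized z hz).2

theorem IsASQ.of_linearIsometryEquiv {F : Type*} [NormedAddCommGroup F] [NormedSpace ℝ F]
    (hE : IsASQ E) (e : E ≃ₗᵢ[ℝ] F) : IsASQ F := by
  classical
  intro S hS ε hε
  obtain ⟨w, hw, hwS⟩ := hE (S.image e.symm) (by simpa using hS) ε hε
  refine ⟨e w, by simpa using hw, fun z hz => ?_⟩
  have hz' := hwS (e.symm z) (Finset.mem_image_of_mem _ hz)
  rw [← e.symm.norm_map (z + e w), ← e.symm.norm_map (z - e w)]
  simpa using hz'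

end

section

variable {X Y : Type*} [NormedAddCommGroup X] [NormedSpace ℝ X]
  [NormedAddCommGroup Y] [NormedSpace ℝ Y]

theorem IsASQ.withLpProd_left (hX : IsASQ X) : IsASQ (WithLp ∞ (X × Y)) := by
  classical
  intro S hS ε hε
  obtain ⟨w, hw, hwS⟩ := hX.exists_of_norm_le_one (S := S.image WithLp.fst)
    (by simpa using fun z hz => hS z hz ▸ WithLp.norm_fst_le (x := z)) hε
  refine ⟨toLp ∞ (w, 0), by simpa using hw, fun z hz => ?_⟩
  have hsnd : ‖z.snd‖ ≤ 1 + ε := by linarith [hS z hz, WithLp.norm_snd_le (x := z)]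
  obtain ⟨hadd, hsub⟩ := hwS z.fst (Finset.mem_image_of_mem _ hz)
  simp only [prod_norm_eq_sup, add_fst, add_snd, sub_fst, sub_snd, toLp_fst, toLp_snd,
    add_zero, sub_zero]
  exact ⟨max_le hadd hsnd, max_le hsub hsnd⟩

theorem IsASQ.withLpProd_right (hY : IsASQ Y) : IsASQ (WithLp ∞ (X × Y)) :=
  (hY.withLpProd_left (Y := X)).of_linearIsometryEquiv
    (LinearIsometryEquiv.withLpProdComm ∞ ℝ Y X)

theorem IsASQ.of_withLpProd_of_not_right (hZ : IsASQ (WithLp ∞ (X × Y))) (hY : ¬IsASQ Y) :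
    IsASQ X := by
  classical
  intro S hS ε hε
  simp only [IsASQ, not_forall, not_exists, not_and, not_le] at hY
  obtain ⟨T, hT, δ, hδ, hTbad⟩ := hY
  obtain ⟨w, hw, hwST⟩ := hZ ((S.image fun x => toLp ∞ (x, (0 : Y))) ∪
      T.image fun y => toLp ∞ ((0 : X), y))
    (by simpa [or_imp, forall_and] using ⟨hS, hT⟩) (min ε δ) (lt_min hε hδ)
  have hw_snd : ‖w.snd‖ ≠ 1 := by
    intro hw1
    obtain ⟨y, hy, hyw⟩ := hTbad w.snd hw1
    obtain ⟨hadd, hsub⟩ := hwST (toLp ∞ (0, y)) (by simp [hy])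
    have h1 := (WithLp.norm_snd_le (x := _)).trans hadd
    have h2 := (WithLp.norm_snd_le (x := _)).trans hsub
    simp only [add_snd, sub_snd, toLp_snd] at h1 h2
    have hmin := min_le_right ε δ
    linarith [hyw (by linarith)]
  have hw_fst : ‖w.fst‖ = 1 := by
    rw [prod_norm_eq_sup] at hw
    rcases max_choice ‖w.fst‖ ‖w.snd‖ with h | h <;> rw [h] at hw
    exacts [hw, absurd hw hw_snd]
  refine ⟨w.fst, hw_fst, fun x hx => ?_⟩
  obtain ⟨hadd, hsub⟩ := hwST (toLp ∞ (x, 0)) (by simp [hx])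
  have h1 := (WithLp.norm_fst_le (x := _)).trans hadd
  have h2 := (WithLp.norm_fst_le (x := _)).trans hsub
  simp only [add_fst, sub_fst, toLp_fst] at h1 h2
  constructor <;> linarith [min_le_left ε δ]

end

theorem stmt_17_general (X Y : Type*) [NormedAddCommGroup X] [NormedSpace ℝ X]
    [NormedAddCommGroup Y] [NormedSpace ℝ Y] :
    IsASQ (WithLp ∞ (X × Y)) ↔ (IsASQ X ∨ IsASQ Y) := by
  constructor
  · intro hZ
    by_cases hY : IsASQ Y
    · exact .inr hY
    · exact .inl (hZ.of_withLpProd_of_not_right hY)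
  · rintro (hX | hY)
    exacts [hX.withLpProd_left, hY.withLpProd_right]

theorem stmt_17 (X Y : Type*) [NormedAddCommGroup X] [NormedSpace ℝ X] [CompleteSpace X]
    [NormedAddCommGroup Y] [NormedSpace ℝ Y] [CompleteSpace Y]
    [Nontrivial X] [Nontrivial Y] :
    IsASQ (WithLp ∞ (X × Y)) ↔ (IsASQ X ∨ IsASQ Y) :=
  stmt_17_general X Y
end
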